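/- arXiv:2509.04867 — 5 statements merged into one kernel-verified Lean document; each statement's English description precedes it below -/
import Mathlib

section
/- Let a > 0 and b ≥ 0 be real constants and let u : [0,∞) → ℝ be differentiable with u'(t) ≤ −a·u(t)² + 2b·u(t) + 2 for all t ≥ 0. Let x₊ := (b + √(b² + 2a))/a denote the larger root of the quadratic −a x² + 2b x + 2. Then for every t > 0 one has u(t) ≤ x₊ + 1/(a t). -/
/-!
The barrier `v t = x₊ + 1 / (a t)` is a strict supersolution of `v' = -a v² + 2 b v + 2`:
writing `p = 1 / (a t)`, one has `v' = -a p²`, whereas the right-hand side at `v` equals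
`-a p² - 2 √(b² + 2a) p`. Since `v → +∞` as `t → 0⁺` while `u` stays bounded there, `u ≤ v` for
small times, and `u` can never cross `v` afterwards: at a touching point `u = v` one would have
`u' ≤ -a u² + 2 b u + 2 < v'`.
-/

open Filter Set Topology

lemma le_of_tendsto_atTop_nhdsGT_of_deriv_lt_of_eq {u u' v v' : ℝ → ℝ} {t : ℝ} (ht : 0 < t)
    (hu : ∀ r ∈ Icc 0 t, HasDerivAt u (u' r) r) (hv : ∀ r ∈ Ioc 0 t, HasDerivAt v (v' r) r)
    (hv_zero : Tendsto v (𝓝[>] 0) atTop) (hcross : ∀ r ∈ Ioo 0 t, u r = v r → u' r < v' r) :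
    u t ≤ v t := by
  have hu_zero : Tendsto u (𝓝[>] 0) (𝓝 (u 0)) :=
    (hu 0 ⟨le_rfl, ht.le⟩).continuousAt.continuousWithinAt.tendsto
  obtain ⟨r₀, hr₀_le, hr₀_pos, hr₀_lt⟩ : ∃ r₀, u r₀ ≤ v r₀ ∧ 0 < r₀ ∧ r₀ < t :=
    (((hu_zero.neg.add_atTop hv_zero).eventually_ge_atTop 0).and (Ioo_mem_nhdsGT ht)).exists.imp
      fun r ⟨h, hr⟩ => ⟨by simpa using h, hr⟩
  refine image_le_of_deriv_right_lt_deriv_boundary' (a := r₀) (b := t) (f' := u') (B' := v')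
    ?_ ?_ hr₀_le ?_ ?_ ?_ ⟨hr₀_lt.le, le_rfl⟩
  · exact fun r hr => (hu r ⟨hr₀_pos.le.trans hr.1, hr.2⟩).continuousAt.continuousWithinAt
  · exact fun r hr => (hu r ⟨hr₀_pos.le.trans hr.1, hr.2.le⟩).hasDerivWithinAt
  · exact fun r hr => (hv r ⟨hr₀_pos.trans_le hr.1, hr.2⟩).continuousAt.continuousWithinAt
  · exact fun r hr => (hv r ⟨hr₀_pos.trans_le hr.1, hr.2.le⟩).hasDerivWithinAt
  · exact fun r hr => hcross r ⟨hr₀_pos.trans_le hr.1, hr.2⟩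

lemma hasDerivAt_const_add_one_div_mul (c : ℝ) {a r : ℝ} (ha : a ≠ 0) (hr : r ≠ 0) :
    HasDerivAt (fun r => c + 1 / (a * r)) (-a * (1 / (a * r)) ^ 2) r := by
  simp only [one_div]
  refine ((((hasDerivAt_id' r).const_mul a).inv (mul_ne_zero ha hr)).const_add c).congr_deriv ?_
  field_simp

lemma tendsto_const_add_one_div_mul_nhdsGT_zero (c : ℝ) {a : ℝ} (ha : 0 < a) :
    Tendsto (fun r => c + 1 / (a * r)) (𝓝[>] 0) atTop := by
  refine tendsto_atTop_add_const_left _ c ?_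
  simpa [mul_inv, mul_comm] using tendsto_inv_nhdsGT_zero.const_mul_atTop (inv_pos.mpr ha)

lemma quadratic_larger_root_add (a b p : ℝ) (ha : 0 < a) :
    -a * ((b + √(b ^ 2 + 2 * a)) / a + p) ^ 2 + 2 * b * ((b + √(b ^ 2 + 2 * a)) / a + p) + 2
      = -a * p ^ 2 - 2 * √(b ^ 2 + 2 * a) * p := by
  have hs : √(b ^ 2 + 2 * a) ^ 2 = b ^ 2 + 2 * a := Real.sq_sqrt (by positivity)
  generalize √(b ^ 2 + 2 * a) = s at hs ⊢
  field_simp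
  linear_combination (-1) * hs

lemma quadratic_larger_root_add_lt (b : ℝ) {a p : ℝ} (ha : 0 < a) (hp : 0 < p) :
    -a * ((b + √(b ^ 2 + 2 * a)) / a + p) ^ 2 + 2 * b * ((b + √(b ^ 2 + 2 * a)) / a + p) + 2
      < -a * p ^ 2 := by
  have hs : 0 < √(b ^ 2 + 2 * a) := Real.sqrt_pos.mpr (by positivity)
  rw [quadratic_larger_root_add a b p ha]
  linarith [mul_pos hs hp]

theorem riccati_comparison_larger_root_general
    (a b : ℝ) (ha : 0 < a) (u : ℝ → ℝ)
    (hdiff : ∀ t, 0 ≤ t → DifferentiableAt ℝ u t)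
    (hineq : ∀ t, 0 ≤ t → deriv u t ≤ -a * (u t) ^ 2 + 2 * b * u t + 2) :
    ∀ t, 0 < t → u t ≤ (b + Real.sqrt (b ^ 2 + 2 * a)) / a + 1 / (a * t) := by
  intro t ht
  refine le_of_tendsto_atTop_nhdsGT_of_deriv_lt_of_eq ht (u' := deriv u)
    (fun r hr => (hdiff r hr.1).hasDerivAt)
    (fun r hr => hasDerivAt_const_add_one_div_mul _ ha.ne' hr.1.ne')
    (tendsto_const_add_one_div_mul_nhdsGT_zero _ ha) fun r hr hur => ?_
  calc deriv u r ≤ -a * (u r) ^ 2 + 2 * b * u r + 2 := hineq r hr.1.le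
    _ < -a * (1 / (a * r)) ^ 2 := by
      rw [hur]
      exact quadratic_larger_root_add_lt b ha (one_div_pos.mpr (mul_pos ha hr.1))

/-- Scalar Riccati comparison estimate: solutions of `u' ≤ -a u² + 2b u + 2` are,
for positive times, bounded by the larger root `x₊ = (b + √(b² + 2a))/a` of the
quadratic plus `1/(a t)`. -/
theorem riccati_comparison_larger_root
    (a b : ℝ) (ha : 0 < a) (hb : 0 ≤ b) (u : ℝ → ℝ)
    (hdiff : ∀ t, 0 ≤ t → DifferentiableAt ℝ u t)
    (hineq : ∀ t, 0 ≤ t → deriv u t ≤ -a * (u t) ^ 2 + 2 * b * u t + 2) :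
    ∀ t, 0 < t → u t ≤ (b + Real.sqrt (b ^ 2 + 2 * a)) / a + 1 / (a * t) :=
  riccati_comparison_larger_root_general a b ha u hdiff hineq
end

section
/- Let a > 0 and b ≥ 0 be real constants and let u : [0,∞) → ℝ be differentiable with u'(t) ≤ −a·u(t)² + 2b·u(t) + 2 for all t ≥ 0. Set Δ := 2√(b² + 2a)/a (the gap between the two roots of the quadratic −a x² + 2b x + 2). Then u(t) ≤ max{u(0), Δ} for all t ≥ 0. -/
/-- All-times scalar Riccati comparison estimate: solutions of `u' ≤ -a u² + 2b u + 2`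
are bounded by the maximum of the initial value and the root gap
`Δ := 2√(b² + 2a)/a` of the quadratic `-a x² + 2b x + 2`. -/
theorem riccati_comparison_all_times
    (a b : ℝ) (ha : 0 < a) (hb : 0 ≤ b) (u : ℝ → ℝ)
    (hdiff : ∀ t, 0 ≤ t → DifferentiableAt ℝ u t)
    (hineq : ∀ t, 0 ≤ t → deriv u t ≤ -a * (u t) ^ 2 + 2 * b * u t + 2) :
    ∀ t, 0 ≤ t → u t ≤ max (u 0) (2 * Real.sqrt (b ^ 2 + 2 * a) / a) := by
  intro t ht
  set s := Real.sqrt (b ^ 2 + 2 * a) with hsdef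
  have hs : s ^ 2 = b ^ 2 + 2 * a := Real.sq_sqrt (by positivity)
  have hs0 : 0 ≤ s := Real.sqrt_nonneg _
  have hsb : b < s := by nlinarith
  set M := max (u 0) (2 * s / a) with hM
  apply le_of_forall_pos_le_add
  intro ε hε
  have hc : ContinuousOn u (Set.Icc 0 t) :=
    fun x hx => (hdiff x hx.1).continuousAt.continuousWithinAt
  have hd : ∀ x ∈ Set.Ico (0:ℝ) t, HasDerivWithinAt u (deriv u x) (Set.Ici x) x :=
    fun x hx => ((hdiff x hx.1).hasDerivAt).hasDerivWithinAt
  have h0 : u 0 ≤ (fun _ : ℝ => M + ε) 0 := by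
    have := le_max_left (u 0) (2 * s / a)
    simpa using by linarith
  have hB : ∀ x : ℝ, HasDerivAt (fun _ : ℝ => M + ε) ((fun _ : ℝ => (0:ℝ)) x) x :=
    fun x => hasDerivAt_const x _
  have bound : ∀ x ∈ Set.Ico (0:ℝ) t, u x = (fun _ : ℝ => M + ε) x → deriv u x < (fun _ : ℝ => (0:ℝ)) x := by
    intro x hx hux
    simp only [] at hux ⊢
    have h1 := hineq x hx.1
    have hge : 2 * s / a ≤ M := le_max_right _ _
    have hux' : 2 * s / a + ε ≤ u x := by rw [hux]; linarith
    have hax : 2 * s < a * u x := by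
      rw [div_add' _ _ _ (ne_of_gt ha), div_le_iff₀ ha] at hux'
      nlinarith
    have h3 : 0 < a * u x - b - s := by linarith
    have h4 : 0 < a * u x - b + s := by nlinarith
    have h5 : -a * (u x) ^ 2 + 2 * b * u x + 2 < 0 := by
      have := mul_pos h3 h4
      have h6 : a * (-a * (u x) ^ 2 + 2 * b * u x + 2) < 0 := by nlinarith
      nlinarith
    calc deriv u x ≤ _ := h1
      _ < 0 := h5
  exact image_le_of_deriv_right_lt_deriv_boundary hc hd h0 hB bound ⟨ht, le_rfl⟩
end

section
/- (Covariance upper bound, Lemma 3.1, part 1.) Let ε > 0, ω_min > 0, C ≥ 0 and, for k = 1,…,n, let q_k ≥ q_min > 0 be constants. Let p₁,…,p_n : [0,∞) → ℝ be differentiable functions satisfying, for every k and every t ≥ 0, p_k'(t) ≤ −(ω_min q_k/ε)·p_k(t)² + 2C·p_k(t) + 2. Define λ_max := √( (2εC/(ω_min q_min))² + 8ε/(ω_min q_min) ). Then (i) max_k p_k(t) ≤ max{ max_k p_k(0), λ_max } for all t ≥ 0, and (ii) max_k p_k(t) ≤ 2·λ_max for all t ≥ ε/(ω_min q_min λ_max).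 -/
/-!
Write `a = ω_min q_min / ε`, so that every `p_k` satisfies `p' ≤ -a p² + 2 C p + 2`, and
`λ_max = √((2C/a)² + 8/a)`. Above `λ_max` the right-hand side is negative, so a trajectory
can never cross the level `max (max_k p_k(0), λ_max)` upwards. Above `2 λ_max` the right-hand side
is even below `-(a/2) p²`, so as long as `p > 2 λ_max` the reciprocal `1/p` grows at rate at least
`a/2`; after time `1/(a λ_max)` this forces `p ≤ 2 λ_max`, and from then on `p` stays below.
-/

open Set

lemma image_le_of_deriv_neg_at_level {g : ℝ → ℝ} {a b K : ℝ}
    (hg : ∀ t ∈ Icc a b, DifferentiableAt ℝ g t) (ha : g a ≤ K)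
    (hK : ∀ t ∈ Ico a b, g t = K → deriv g t < 0) :
    ∀ t ∈ Icc a b, g t ≤ K := fun _ ht =>
  image_le_of_deriv_right_lt_deriv_boundary (B := fun _ => K) (B' := fun _ => 0)
    (fun t ht => (hg t ht).continuousAt.continuousWithinAt)
    (fun t ht => (hg t (Ico_subset_Icc_self ht)).hasDerivAt.hasDerivWithinAt)
    ha (fun t => hasDerivAt_const t K) hK ht

lemma mul_sub_le_inv_sub_inv_of_deriv_le_neg_sq {g : ℝ → ℝ} {b s t : ℝ} (hst : s ≤ t)
    (hg : ∀ u ∈ Icc s t, DifferentiableAt ℝ g u) (hpos : ∀ u ∈ Icc s t, 0 < g u)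
    (hderiv : ∀ u ∈ Ioo s t, deriv g u ≤ -b * g u ^ 2) :
    b * (t - s) ≤ (g t)⁻¹ - (g s)⁻¹ := by
  have hinv : ∀ u ∈ Icc s t, HasDerivAt (fun v => (g v)⁻¹) (-deriv g u / g u ^ 2) u :=
    fun u hu => (hg u hu).hasDerivAt.inv (hpos u hu).ne'
  refine (convex_Icc s t).mul_sub_le_image_sub_of_le_deriv
    (fun u hu => (hinv u hu).continuousAt.continuousWithinAt) ?_ ?_
    s (left_mem_Icc.2 hst) t (right_mem_Icc.2 hst) hst
  · rw [interior_Icc]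
    exact fun u hu => (hinv u (Ioo_subset_Icc_self hu)).differentiableAt.differentiableWithinAt
  · rw [interior_Icc]
    intro u hu
    have hgu := hpos u (Ioo_subset_Icc_self hu)
    rw [(hinv u (Ioo_subset_Icc_self hu)).deriv, le_div_iff₀ (by positivity)]
    linarith [hderiv u hu]

section Riccati

variable {a C : ℝ}

/-- The level above which the right-hand side `-a x² + 2 C x + 2` of the Riccati inequality
is negative; it is `λ_max` for `a = ω_min q_min / ε`. -/
noncomputable def riccatiLevel (a C : ℝ) : ℝ := √((2 * C / a) ^ 2 + 8 / a)

lemma riccatiLevel_pos (ha : 0 < a) : 0 < riccatiLevel a C :=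
  Real.sqrt_pos.2 (by positivity)

lemma mul_riccatiLevel_sq (ha : 0 < a) : (a * riccatiLevel a C) ^ 2 = (2 * C) ^ 2 + 8 * a := by
  rw [mul_pow, riccatiLevel, Real.sq_sqrt (by positivity)]
  field_simp

lemma abs_two_mul_lt_mul_riccatiLevel (ha : 0 < a) : |2 * C| < a * riccatiLevel a C :=
  abs_lt_of_sq_lt_sq (by nlinarith [mul_riccatiLevel_sq (C := C) ha])
    (mul_pos ha (riccatiLevel_pos ha)).le

lemma riccati_rhs_neg (ha : 0 < a) {x : ℝ} (hx : riccatiLevel a C ≤ x) :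
    -a * x ^ 2 + 2 * C * x + 2 < 0 := by
  set m := a * riccatiLevel a C
  have hm := mul_riccatiLevel_sq (C := C) ha
  have hCm := (abs_lt.1 (abs_two_mul_lt_mul_riccatiLevel (C := C) ha))
  have hmx : m ≤ a * x := mul_le_mul_of_nonneg_left hx ha.le
  -- `a (a x² - 2 C x - 2) = (a x - C)² - m² / 4` and `a x - C > m / 2 > 0`
  have : 0 < a * (a * x ^ 2 - 2 * C * x - 2) := by
    nlinarith [mul_pos (by linarith : 0 < a * x - C - m / 2) (by linarith : 0 < a * x - C + m / 2)]
  nlinarith [pos_of_mul_pos_right this ha.le]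

lemma riccati_rhs_lt_neg_half_sq (ha : 0 < a) {x : ℝ} (hx : 2 * riccatiLevel a C ≤ x) :
    -a * x ^ 2 + 2 * C * x + 2 < -(a / 2) * x ^ 2 := by
  set m := a * riccatiLevel a C
  have hm := mul_riccatiLevel_sq (C := C) ha
  have hCm := (abs_lt.1 (abs_two_mul_lt_mul_riccatiLevel (C := C) ha))
  have hmx : 2 * m ≤ a * x := by nlinarith
  -- `a (a x² / 2 - 2 C x - 2) = (a x - 2 C)² / 2 - (2 C)² / 2 - 2 a` and `a x - 2 C > m > 0`
  have : 0 < a * (a / 2 * x ^ 2 - 2 * C * x - 2) := by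
    nlinarith [mul_pos (by linarith : 0 < a * x - 2 * C - m) (by linarith : 0 < a * x - 2 * C + m)]
  nlinarith [pos_of_mul_pos_right this ha.le]

variable {g : ℝ → ℝ}

lemma riccati_le_of_le (ha : 0 < a) (hg : ∀ t, 0 ≤ t → DifferentiableAt ℝ g t)
    (hderiv : ∀ t, 0 ≤ t → deriv g t ≤ -a * g t ^ 2 + 2 * C * g t + 2) {s M : ℝ}
    (hs : 0 ≤ s) (hM : riccatiLevel a C ≤ M) (hgs : g s ≤ M) :
    ∀ t, s ≤ t → g t ≤ M := fun t hst =>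
  image_le_of_deriv_neg_at_level (fun u hu => hg u (hs.trans hu.1)) hgs
    (fun u hu hgu => by
      linarith [hderiv u (hs.trans hu.1),
        riccati_rhs_neg ha (hgu ▸ hM : riccatiLevel a C ≤ g u)])
    t ⟨hst, le_rfl⟩

lemma riccati_le_two_mul_riccatiLevel (ha : 0 < a)
    (hg : ∀ t, 0 ≤ t → DifferentiableAt ℝ g t)
    (hderiv : ∀ t, 0 ≤ t → deriv g t ≤ -a * g t ^ 2 + 2 * C * g t + 2) {t : ℝ}
    (ht : 1 ≤ a * t * riccatiLevel a C) :
    g t ≤ 2 * riccatiLevel a C := by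
  set L := riccatiLevel a C
  have hL : 0 < L := riccatiLevel_pos ha
  have ht0 : 0 ≤ t := by
    by_contra! h
    nlinarith [mul_pos ha hL]
  by_cases hdip : ∃ s ∈ Icc 0 t, g s ≤ 2 * L
  · obtain ⟨s, hs, hgs⟩ := hdip
    exact riccati_le_of_le ha hg hderiv hs.1 (by linarith) hgs t hs.2
  · simp only [not_exists, not_and, not_le] at hdip
    have h2L : 0 < 2 * L := by positivity
    have hgrowth : a / 2 * (t - 0) ≤ (g t)⁻¹ - (g 0)⁻¹ :=
      mul_sub_le_inv_sub_inv_of_deriv_le_neg_sq ht0 (fun u hu => hg u hu.1)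
        (fun u hu => h2L.trans (hdip u hu))
        (fun u hu => by
          linarith [hderiv u hu.1.le,
            riccati_rhs_lt_neg_half_sq ha (hdip u (Ioo_subset_Icc_self hu)).le])
    have hg0 : 0 < (g 0)⁻¹ := inv_pos.2 (h2L.trans (hdip 0 ⟨le_rfl, ht0⟩))
    have hinv : (2 * L)⁻¹ < (g t)⁻¹ := by
      rw [inv_eq_one_div, div_lt_iff₀ h2L]
      nlinarith
    exact ((inv_lt_inv₀ h2L (h2L.trans (hdip t ⟨ht0, le_rfl⟩))).1 hinv).le

end Riccati

theorem covariance_upper_bound_general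
    {n : ℕ} (hn : 0 < n) (ε ωmin C qmin : ℝ)
    (hε : 0 < ε) (hω : 0 < ωmin) (hqmin : 0 < qmin)
    (q : Fin n → ℝ) (hq : ∀ k, qmin ≤ q k)
    (p : Fin n → ℝ → ℝ)
    (hdiff : ∀ k, ∀ t, 0 ≤ t → DifferentiableAt ℝ (p k) t)
    (hineq : ∀ k, ∀ t, 0 ≤ t →
      deriv (p k) t ≤ -(ωmin * q k / ε) * (p k t) ^ 2 + 2 * C * p k t + 2) :
    (∀ t, 0 ≤ t → ∀ k, p k t ≤
        max (Finset.univ.sup' ⟨⟨0, hn⟩, Finset.mem_univ _⟩ fun j => p j 0)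
          (Real.sqrt ((2 * ε * C / (ωmin * qmin)) ^ 2 + 8 * ε / (ωmin * qmin)))) ∧
    (∀ t, ε / (ωmin * qmin *
        Real.sqrt ((2 * ε * C / (ωmin * qmin)) ^ 2 + 8 * ε / (ωmin * qmin))) ≤ t →
      ∀ k, p k t ≤
        2 * Real.sqrt ((2 * ε * C / (ωmin * qmin)) ^ 2 + 8 * ε / (ωmin * qmin))) := by
  set a := ωmin * qmin / ε with ha_def
  have ha : 0 < a := by positivity
  have hlevel :
      √((2 * ε * C / (ωmin * qmin)) ^ 2 + 8 * ε / (ωmin * qmin)) = riccatiLevel a C := by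
    rw [riccatiLevel, ha_def]
    congr 1
    field_simp
  have hriccati (k : Fin n) (t : ℝ) (ht : 0 ≤ t) :
      deriv (p k) t ≤ -a * p k t ^ 2 + 2 * C * p k t + 2 := by
    have hak : a ≤ ωmin * q k / ε := by rw [ha_def]; gcongr; exact hq k
    linarith [hineq k t ht, mul_le_mul_of_nonneg_right hak (sq_nonneg (p k t))]
  rw [hlevel]
  refine ⟨fun t ht k => ?_, fun t ht k => ?_⟩
  · have hk0 := Finset.le_sup' (fun j => p j 0) (Finset.mem_univ k)
    exact riccati_le_of_le ha (hdiff k) (hriccati k) le_rfl (le_max_right _ _)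
      (hk0.trans (le_max_left _ _)) t ht
  · refine riccati_le_two_mul_riccatiLevel ha (hdiff k) (hriccati k) ?_
    rw [div_le_iff₀ (by positivity [riccatiLevel_pos (C := C) ha])] at ht
    rw [ha_def, div_mul_eq_mul_div, div_mul_eq_mul_div, one_le_div hε]
    linarith

/-- Covariance upper bound (Lemma 3.1, part 1): the diagonal entries `p k` of the
ensemble covariance, each satisfying the Riccati-type inequality
`p_k' ≤ -(ω_min q_k/ε) p_k² + 2C p_k + 2`, are bounded by
`max{max_k p_k(0), λ_max}` for all times and by `2 λ_max` after the burn-in time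
`ε/(ω_min q_min λ_max)`, with `λ_max := √((2εC/(ω_min q_min))² + 8ε/(ω_min q_min))`. -/
theorem covariance_upper_bound
    {n : ℕ} (hn : 0 < n) (ε ωmin C qmin : ℝ)
    (hε : 0 < ε) (hω : 0 < ωmin) (hC : 0 ≤ C) (hqmin : 0 < qmin)
    (q : Fin n → ℝ) (hq : ∀ k, qmin ≤ q k)
    (p : Fin n → ℝ → ℝ)
    (hdiff : ∀ k, ∀ t, 0 ≤ t → DifferentiableAt ℝ (p k) t)
    (hineq : ∀ k, ∀ t, 0 ≤ t →
      deriv (p k) t ≤ -(ωmin * q k / ε) * (p k t) ^ 2 + 2 * C * p k t + 2) :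
    (∀ t, 0 ≤ t → ∀ k, p k t ≤
        max (Finset.univ.sup' ⟨⟨0, hn⟩, Finset.mem_univ _⟩ fun j => p j 0)
          (Real.sqrt ((2 * ε * C / (ωmin * qmin)) ^ 2 + 8 * ε / (ωmin * qmin)))) ∧
    (∀ t, ε / (ωmin * qmin *
        Real.sqrt ((2 * ε * C / (ωmin * qmin)) ^ 2 + 8 * ε / (ωmin * qmin))) ≤ t →
      ∀ k, p k t ≤
        2 * Real.sqrt ((2 * ε * C / (ωmin * qmin)) ^ 2 + 8 * ε / (ωmin * qmin))) :=
  covariance_upper_bound_general hn ε ωmin C qmin hε hω hqmin q hq p hdiff hineq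
end

section
/- Let α, β, γ, ε, Λ > 0. Let p : [0,∞) → [0,∞) be differentiable and z : [0,∞) → [0,Λ] be any function such that p'(t) ≥ −α·√(p(t)·z(t)) − (β/ε)·p(t)·z(t) + γ + 1 for all t ≥ 0. Define c := min{ γ²/(9α²Λ), γε/(3βΛ) }. Then (i) p(t) ≥ min{p(0), c} for all t ≥ 0, and (ii) p(t) ≥ c for all t ≥ c. -/
/-- Scalar comparison estimate underlying the covariance lower bound (Lemma 3.1, part 2):
if `p' ≥ -α√(p z) - (β/ε) p z + γ + 1` with `0 ≤ z ≤ Λ`, then `p` stays above the floor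
`c := min{γ²/(9α²Λ), γε/(3βΛ)}` (or above its initial value) and reaches the floor
after time `c`. -/
theorem covariance_floor_scalar
    (α β γ ε Λ : ℝ) (hα : 0 < α) (hβ : 0 < β) (hγ : 0 < γ) (hε : 0 < ε) (hΛ : 0 < Λ)
    (p z : ℝ → ℝ)
    (hp : ∀ t, 0 ≤ t → 0 ≤ p t)
    (hz : ∀ t, 0 ≤ t → z t ∈ Set.Icc (0 : ℝ) Λ)
    (hdiff : ∀ t, 0 ≤ t → DifferentiableAt ℝ p t)
    (hineq : ∀ t, 0 ≤ t →
      -α * Real.sqrt (p t * z t) - (β / ε) * (p t * z t) + γ + 1 ≤ deriv p t) :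
    (∀ t, 0 ≤ t →
      min (p 0) (min (γ ^ 2 / (9 * α ^ 2 * Λ)) (γ * ε / (3 * β * Λ))) ≤ p t) ∧
    (∀ t, min (γ ^ 2 / (9 * α ^ 2 * Λ)) (γ * ε / (3 * β * Λ)) ≤ t →
      min (γ ^ 2 / (9 * α ^ 2 * Λ)) (γ * ε / (3 * β * Λ)) ≤ p t) := by
  set c : ℝ := min (γ ^ 2 / (9 * α ^ 2 * Λ)) (γ * ε / (3 * β * Λ)) with hc_def
  have hc0 : 0 < c := lt_min (by positivity) (by positivity)
  -- Key derivative lower bound: while `p ≤ c`, the derivative is at least 1.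
  have key : ∀ t, 0 ≤ t → p t ≤ c → 1 ≤ deriv p t := by
    intro t ht hpc
    have hz' := hz t ht
    have hpz0 : 0 ≤ p t * z t := mul_nonneg (hp t ht) hz'.1
    have hpzΛ : p t * z t ≤ c * Λ :=
      mul_le_mul hpc hz'.2 hz'.1 hc0.le
    -- bound on the sqrt term
    have h1 : α * Real.sqrt (p t * z t) ≤ γ / 3 := by
      have hb : p t * z t ≤ (γ / (3 * α)) ^ 2 := by
        have : c * Λ ≤ γ ^ 2 / (9 * α ^ 2 * Λ) * Λ := by
          have := min_le_left (γ ^ 2 / (9 * α ^ 2 * Λ)) (γ * ε / (3 * β * Λ))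
          nlinarith
        have heq : γ ^ 2 / (9 * α ^ 2 * Λ) * Λ = (γ / (3 * α)) ^ 2 := by
          field_simp; ring
        linarith [hpzΛ, heq ▸ this]
      have hs : Real.sqrt (p t * z t) ≤ γ / (3 * α) := by
        have h3 : (0:ℝ) ≤ γ / (3 * α) := by positivity
        calc Real.sqrt (p t * z t) ≤ Real.sqrt ((γ / (3 * α)) ^ 2) :=
              Real.sqrt_le_sqrt hb
          _ = γ / (3 * α) := by rw [Real.sqrt_sq h3]
      calc α * Real.sqrt (p t * z t) ≤ α * (γ / (3 * α)) := by nlinarith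
        _ = γ / 3 := by field_simp
    -- bound on the linear term
    have h2 : (β / ε) * (p t * z t) ≤ γ / 3 := by
      have hcle : c ≤ γ * ε / (3 * β * Λ) := min_le_right _ _
      have : (β / ε) * (p t * z t) ≤ (β / ε) * (c * Λ) := by
        apply mul_le_mul_of_nonneg_left hpzΛ (by positivity)
      have h4 : (β / ε) * (c * Λ) ≤ (β / ε) * (γ * ε / (3 * β * Λ) * Λ) := by
        apply mul_le_mul_of_nonneg_left _ (by positivity)
        nlinarith
      have h5 : (β / ε) * (γ * ε / (3 * β * Λ) * Λ) = γ / 3 := by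
        field_simp
      linarith
    have := hineq t ht
    linarith
  -- continuity of p on [0, ∞)
  have hcont : ∀ t1 : ℝ, ContinuousOn p (Set.Icc 0 t1) := by
    intro t1
    exact fun t ht => (hdiff t ht.1).continuousAt.continuousWithinAt
  -- Main claim: p t ≥ min (p 0 + t) c for all t ≥ 0.
  have main : ∀ t1, 0 ≤ t1 → min (p 0 + t1) c ≤ p t1 := by
    intro t1 ht1
    by_contra hcon
    push_neg at hcon
    set S : Set ℝ := Set.Icc 0 t1 ∩ {t | min (p 0 + t) c ≤ p t} with hS_def
    have hS0 : (0:ℝ) ∈ S := by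
      constructor
      · exact ⟨le_refl 0, ht1⟩
      · simp only [Set.mem_setOf_eq, add_zero]
        exact min_le_left _ _
    have hSne : S.Nonempty := ⟨0, hS0⟩
    have hSbdd : BddAbove S := ⟨t1, fun x hx => hx.1.2⟩
    have hSclosed : IsClosed S := by
      have : S = Set.Icc 0 t1 ∩
          (fun t => p t - min (p 0 + t) c) ⁻¹' Set.Ici 0 := by
        ext x
        simp [hS_def, sub_nonneg, and_comm]
      rw [this]
      apply ContinuousOn.preimage_isClosed_of_isClosed _ isClosed_Icc isClosed_Ici
      exact (hcont t1).sub
        (((continuous_const.add continuous_id).min continuous_const).continuousOn)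
    set s : ℝ := sSup S with hs_def
    have hsS : s ∈ S := hSclosed.csSup_mem hSne hSbdd
    have hs0 : 0 ≤ s := hsS.1.1
    have hst1 : s ≤ t1 := hsS.1.2
    have hsB : min (p 0 + s) c ≤ p s := hsS.2
    have hslt : s < t1 := by
      rcases lt_or_eq_of_le hst1 with h | h
      · exact h
      · exact absurd (h ▸ hsB) (not_le.mpr hcon)
    -- every t in (s, t1] is not in S, so p t < min (p 0 + t) c ≤ c there
    have hnotS : ∀ t, s < t → t ≤ t1 → p t < min (p 0 + t) c := by
      intro t hts htt1
      by_contra hge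
      push_neg at hge
      have : t ∈ S := ⟨⟨le_trans hs0 hts.le, htt1⟩, hge⟩
      exact absurd (le_csSup hSbdd this) (not_le.mpr hts)
    -- p - id is monotone on [s, t1]
    have hmono : MonotoneOn (fun t => p t - t) (Set.Icc s t1) := by
      apply monotoneOn_of_deriv_nonneg (convex_Icc s t1)
      · apply ContinuousOn.sub
        · exact fun t ht => (hdiff t (le_trans hs0 ht.1)).continuousAt.continuousWithinAt
        · exact continuousOn_id
      · intro t ht
        rw [interior_Icc] at ht
        exact ((hdiff t (le_trans hs0 ht.1.le)).sub differentiableAt_id).differentiableWithinAt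
      · intro t ht
        rw [interior_Icc] at ht
        have ht0 : 0 ≤ t := le_trans hs0 ht.1.le
        have hptc : p t ≤ c := by
          have := hnotS t ht.1 ht.2.le
          exact le_of_lt (lt_of_lt_of_le this (min_le_right _ _))
        have hd1 : 1 ≤ deriv p t := key t ht0 hptc
        have hdd : deriv (fun u => p u - u) t = deriv p t - 1 :=
          ((hdiff t ht0).hasDerivAt.sub (hasDerivAt_id t)).deriv
        rw [hdd]
        linarith
    have hmono' : p s - s ≤ p t1 - t1 :=
      hmono ⟨le_refl s, hst1⟩ ⟨hst1, le_refl t1⟩ hst1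
    -- conclude: p t1 ≥ min (p 0 + s) c + (t1 - s) ≥ min (p 0 + t1) c
    have hfin : min (p 0 + t1) c ≤ p t1 := by
      have h6 : min (p 0 + s) c + (t1 - s) ≤ p t1 := by linarith
      have h7 : min (p 0 + t1) c ≤ min (p 0 + s) c + (t1 - s) := by
        rcases le_total (p 0 + s) c with h | h
        · rw [min_eq_left h]
          calc min (p 0 + t1) c ≤ p 0 + t1 := min_le_left _ _
            _ = p 0 + s + (t1 - s) := by ring
        · rw [min_eq_right h]
          calc min (p 0 + t1) c ≤ c := min_le_right _ _
            _ ≤ c + (t1 - s) := by linarith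
      linarith
    exact absurd hfin (not_le.mpr hcon)
  constructor
  · intro t ht
    have := main t ht
    have : min (p 0) c ≤ min (p 0 + t) c :=
      min_le_min (by linarith) (le_refl c)
    linarith [main t ht]
  · intro t ht
    have ht0 : 0 ≤ t := le_trans hc0.le ht
    have hp0 : 0 ≤ p 0 := hp 0 (le_refl 0)
    have : c ≤ min (p 0 + t) c := le_min (by linarith) (le_refl c)
    linarith [main t ht0]
end

section
/- (Covariance lower bound, Lemma 3.1, part 2.) Let C > 0, β > 0, ε > 0, Λ > 0. Let p₁,…,p_n : [0,∞) → [0,∞) be differentiable and set z(t) := max_k p_k(t). Assume z(t) ≤ Λ for all t ≥ 0 and, for every k and every t ≥ 0, p_k'(t) ≥ −2C·√(p_k(t)·z(t)) − (β/ε)·p_k(t)·z(t) + 4. Define λ_min := min{ 1/(4C²Λ), ε/(βΛ) }. Then (i) min_k p_k(t) ≥ min{ min_k p_k(0), λ_min } for all t ≥ 0, and (ii) min_k p_k(t) ≥ λ_min for all t ≥ λ_min. -/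
open Set

/-- Lower fencing: a function with positive derivative on the barrier stays above it. -/
lemma image_ge_of_deriv_barrier {f B B' : ℝ → ℝ} {a b : ℝ}
    (hf : ∀ x ∈ Icc a b, DifferentiableAt ℝ f x)
    (ha : B a ≤ f a)
    (hB : ∀ x, HasDerivAt B (B' x) x)
    (bound : ∀ x ∈ Ico a b, f x = B x → B' x < deriv f x) :
    ∀ x ∈ Icc a b, B x ≤ f x := by
  intro x hx
  have h := image_le_of_deriv_right_lt_deriv_boundary
    (f := fun y => -f y) (f' := fun y => -deriv f y)
    (B := fun y => -B y) (B' := fun y => -B' y)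
    (a := a) (b := b)
    (fun y hy => ((hf y hy).neg).continuousAt.continuousWithinAt)
    (fun y hy => (((hf y (Ico_subset_Icc_self hy)).hasDerivAt).neg).hasDerivWithinAt)
    (by simpa using ha)
    (fun y => (hB y).neg)
    (fun y hy hfy => by
      have : f y = B y := by linarith [neg_injective (by simpa using hfy : -f y = -B y)]
      have := bound y hy this
      simpa using this)
  have := h hx
  simpa using this

/-- Constant floor is preserved. -/
lemma stay_const {f : ℝ → ℝ} {lam c a b : ℝ} (hc : c ≤ lam) (ha0 : 0 ≤ a) (hab : a ≤ b)
    (hdiff : ∀ t, 0 ≤ t → DifferentiableAt ℝ f t)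
    (hder : ∀ t, 0 ≤ t → f t ≤ lam → 2 ≤ deriv f t)
    (hfa : c ≤ f a) : c ≤ f b := by
  have := image_ge_of_deriv_barrier (f := f) (B := fun _ => c) (B' := fun _ => 0)
    (a := a) (b := b)
    (fun x hx => hdiff x (ha0.trans hx.1)) hfa
    (fun x => hasDerivAt_const _ _)
    (fun x hx hfx => by
      have h2 := hder x (ha0.trans hx.1) (hfx.le.trans hc)
      show (0:ℝ) < deriv f x
      linarith)
  exact this b ⟨hab, le_rfl⟩

/-- The floor `lam` is reached by time `lam`. -/
lemma reach_floor {f : ℝ → ℝ} {lam : ℝ} (hlam : 0 < lam) (hf0 : 0 ≤ f 0)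
    (hdiff : ∀ t, 0 ≤ t → DifferentiableAt ℝ f t)
    (hder : ∀ t, 0 ≤ t → f t ≤ lam → 2 ≤ deriv f t) : lam ≤ f lam := by
  have := image_ge_of_deriv_barrier (f := f) (B := fun x => x) (B' := fun _ => 1)
    (a := 0) (b := lam)
    (fun x hx => hdiff x hx.1) (by simpa using hf0)
    (fun x => hasDerivAt_id x)
    (fun x hx hfx => by
      have h2 := hder x hx.1 (by rw [hfx]; exact hx.2.le)
      show (1:ℝ) < deriv f x
      linarith)
  simpa using this lam ⟨hlam.le, le_rfl⟩

/-- Covariance lower bound (Lemma 3.1, part 2): the diagonal entries `p k` of the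
ensemble covariance, with `z(t) := max_k p_k(t) ≤ Λ` and satisfying
`p_k' ≥ -2C√(p_k z) - (β/ε) p_k z + 4`, stay above the floor
`λ_min := min{1/(4C²Λ), ε/(βΛ)}` (or above their initial minimum), and reach the floor
after time `λ_min`. -/
theorem covariance_lower_bound
    {n : ℕ} (hn : 0 < n) (C β ε Λ : ℝ)
    (hC : 0 < C) (hβ : 0 < β) (hε : 0 < ε) (hΛ : 0 < Λ)
    (p : Fin n → ℝ → ℝ)
    (hp : ∀ k, ∀ t, 0 ≤ t → 0 ≤ p k t)
    (hdiff : ∀ k, ∀ t, 0 ≤ t → DifferentiableAt ℝ (p k) t)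
    (hz : ∀ t, 0 ≤ t → (Finset.univ.sup' ⟨⟨0, hn⟩, Finset.mem_univ _⟩ fun k => p k t) ≤ Λ)
    (hineq : ∀ k, ∀ t, 0 ≤ t →
      -2 * C * Real.sqrt (p k t * (Finset.univ.sup' ⟨⟨0, hn⟩, Finset.mem_univ _⟩ fun j => p j t))
        - (β / ε) * (p k t * (Finset.univ.sup' ⟨⟨0, hn⟩, Finset.mem_univ _⟩ fun j => p j t))
        + 4 ≤ deriv (p k) t) :
    (∀ t, 0 ≤ t →
      min (Finset.univ.inf' ⟨⟨0, hn⟩, Finset.mem_univ _⟩ fun k => p k 0)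
          (min (1 / (4 * C ^ 2 * Λ)) (ε / (β * Λ)))
        ≤ Finset.univ.inf' ⟨⟨0, hn⟩, Finset.mem_univ _⟩ fun k => p k t) ∧
    (∀ t, min (1 / (4 * C ^ 2 * Λ)) (ε / (β * Λ)) ≤ t →
      min (1 / (4 * C ^ 2 * Λ)) (ε / (β * Λ))
        ≤ Finset.univ.inf' ⟨⟨0, hn⟩, Finset.mem_univ _⟩ fun k => p k t) := by
  set lam := min (1 / (4 * C ^ 2 * Λ)) (ε / (β * Λ)) with hlamdef
  have hlampos : 0 < lam := lt_min (by positivity) (by positivity)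
  -- key derivative bound when below the floor
  have key : ∀ k, ∀ t, 0 ≤ t → p k t ≤ lam → 2 ≤ deriv (p k) t := by
    intro k t ht hpk
    set z := (Finset.univ.sup' ⟨⟨0, hn⟩, Finset.mem_univ _⟩ fun j => p j t) with hzdef
    have hzΛ : z ≤ Λ := hz t ht
    have hz0 : 0 ≤ z := (hp k t ht).trans (Finset.le_sup' (fun j => p j t) (Finset.mem_univ k))
    have hpz : p k t * z ≤ lam * Λ :=
      mul_le_mul hpk hzΛ hz0 hlampos.le
    have h1 : p k t * z ≤ 1 / (4 * C ^ 2) := by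
      have : lam * Λ ≤ (1 / (4 * C ^ 2 * Λ)) * Λ :=
        mul_le_mul_of_nonneg_right (min_le_left _ _) hΛ.le
      have heq : (1 / (4 * C ^ 2 * Λ)) * Λ = 1 / (4 * C ^ 2) := by
        field_simp
      linarith
    have h2 : p k t * z ≤ ε / β := by
      have : lam * Λ ≤ (ε / (β * Λ)) * Λ :=
        mul_le_mul_of_nonneg_right (min_le_right _ _) hΛ.le
      have heq : (ε / (β * Λ)) * Λ = ε / β := by field_simp
      linarith
    have hsqrt : Real.sqrt (p k t * z) ≤ 1 / (2 * C) := by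
      rw [show (1 / (2 * C)) = Real.sqrt ((1 / (2 * C)) ^ 2) from
        (Real.sqrt_sq (by positivity)).symm]
      apply Real.sqrt_le_sqrt
      have : (1 / (2 * C)) ^ 2 = 1 / (4 * C ^ 2) := by ring
      linarith
    have hA : 2 * C * Real.sqrt (p k t * z) ≤ 1 := by
      have := mul_le_mul_of_nonneg_left hsqrt (by positivity : (0:ℝ) ≤ 2 * C)
      have heq : 2 * C * (1 / (2 * C)) = 1 := by field_simp
      linarith
    have hB : (β / ε) * (p k t * z) ≤ 1 := by
      have := mul_le_mul_of_nonneg_left h2 (by positivity : (0:ℝ) ≤ β / ε)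
      have heq : (β / ε) * (ε / β) = 1 := by field_simp
      linarith
    have := hineq k t ht
    rw [← hzdef] at this
    linarith
  constructor
  · intro t ht
    apply Finset.le_inf'
    intro k _
    have h1 : (Finset.univ.inf' ⟨⟨0, hn⟩, Finset.mem_univ _⟩ fun k => p k 0) ≤ p k 0 :=
      Finset.inf'_le _ (Finset.mem_univ k)
    have h2 : min (p k 0) lam ≤ p k t :=
      stay_const (min_le_right _ _) le_rfl ht (hdiff k) (key k) (min_le_left _ _)
    exact le_trans (min_le_min h1 le_rfl) h2
  · intro t ht
    apply Finset.le_inf'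
    intro k _
    have h1 : lam ≤ p k lam :=
      reach_floor hlampos (hp k 0 le_rfl) (hdiff k) (key k)
    exact stay_const le_rfl hlampos.le ht (hdiff k) (key k) h1
end
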